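/- Let E be a finite-dimensional real normed vector space, ω : E →ₗ[ℝ] E →ₗ[ℝ] ℝ a nondegenerate alternating bilinear form, and U, S linear subspaces of E that are complementary (E = U ⊕ S) and on which ω vanishes identically (ω u u' = 0 for all u, u' ∈ U and ω s s' = 0 for all s, s' ∈ S). Then there exists a constant c > 0 such that for every continuous linear map A : E →L[ℝ] E with ω (A x) (A y) = ω x y for all x, y ∈ E, A(U) ⊆ U and A(S) ⊆ S, and for every u ∈ U, one has c·‖u‖ ≤ (sup { ‖A s‖ : s ∈ S, ‖s‖ = 1 })·‖A u‖. -/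

import Mathlib

/-!
Let `T : U → S*` be the pairing `u ↦ ω u ·`. An element of `U` paired to zero with `S` is
`ω`-orthogonal to `U` (which is isotropic) and to `S`, hence to `U ⊕ S = E`, so it vanishes
by nondegeneracy. Being an injective map of finite-dimensional spaces, `T` is bounded below:
`‖u‖ ≤ K ‖T u‖`. For `A` preserving `ω`, `T u s = ω (A u) (A s)`, so
`‖T u‖ ≤ ‖ω‖ ‖A u‖ M`, where `M` is the norm of `A` on `S`.
-/

theorem ContinuousLinearMap.norm_apply_le_sSup_mul_norm {𝕜 E F : Type*} [RCLike 𝕜]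
    [NormedAddCommGroup E] [NormedSpace 𝕜 E] [NormedAddCommGroup F] [NormedSpace 𝕜 F]
    (A : E →L[𝕜] F) (S : Submodule 𝕜 E) {s : E} (hs : s ∈ S) :
    ‖A s‖ ≤ sSup ((fun s => ‖A s‖) '' {s : E | s ∈ S ∧ ‖s‖ = 1}) * ‖s‖ := by
  set M := sSup ((fun s => ‖A s‖) '' {s : E | s ∈ S ∧ ‖s‖ = 1})
  have hbdd : BddAbove ((fun s => ‖A s‖) '' {s : E | s ∈ S ∧ ‖s‖ = 1}) := by
    refine ⟨‖A‖, ?_⟩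
    rintro _ ⟨t, ⟨-, ht⟩, rfl⟩
    simpa [ht] using A.le_opNorm t
  have hM : ‖A.comp S.subtypeL‖ ≤ M := by
    refine ContinuousLinearMap.opNorm_le_of_unit_norm ?_ fun t ht => ?_
    · exact Real.sSup_nonneg (by rintro _ ⟨t, -, rfl⟩; exact norm_nonneg _)
    · exact le_csSup hbdd ⟨t, ⟨t.2, ht⟩, rfl⟩
  calc ‖A s‖ = ‖A.comp S.subtypeL ⟨s, hs⟩‖ := rfl
    _ ≤ ‖A.comp S.subtypeL‖ * ‖s‖ := (A.comp S.subtypeL).le_opNorm _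
    _ ≤ M * ‖s‖ := by gcongr

theorem LinearMap.SeparatingLeft.exists_norm_le_mul {𝕜 E F G : Type*}
    [NontriviallyNormedField 𝕜] [CompleteSpace 𝕜]
    [NormedAddCommGroup E] [NormedSpace 𝕜 E] [FiniteDimensional 𝕜 E]
    [NormedAddCommGroup F] [NormedSpace 𝕜 F] [FiniteDimensional 𝕜 F]
    [NormedAddCommGroup G] [NormedSpace 𝕜 G]
    {B : E →ₗ[𝕜] F →ₗ[𝕜] G} (hB : B.SeparatingLeft) :
    ∃ K > 0, ∀ x C, 0 ≤ C → (∀ y, ‖B x y‖ ≤ C * ‖y‖) → ‖x‖ ≤ K * C := by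
  let T : E →L[𝕜] F →L[𝕜] G := B.toContinuousBilinearMap
  have hker : LinearMap.ker (T : E →ₗ[𝕜] F →L[𝕜] G) = ⊥ :=
    LinearMap.ker_eq_bot'.2 fun x hx => hB x fun y => by
      simpa [T] using congrArg (fun f : F →L[𝕜] G => f y) hx
  obtain ⟨K, hK, hT⟩ := LinearMap.exists_antilipschitzWith _ hker
  refine ⟨K, hK, fun x C hC hx => ?_⟩
  calc ‖x‖ ≤ K * ‖T x‖ := hT.le_mul_norm (map_zero T) x
    _ ≤ K * C := by gcongr; exact (T x).opNorm_le_bound hC hx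

theorem LinearMap.separatingLeft_domRestrict₁₂_of_isCompl {R M N : Type*} [CommRing R]
    [AddCommGroup M] [Module R M] [AddCommGroup N] [Module R N]
    {ω : M →ₗ[R] M →ₗ[R] N} (hω : ω.SeparatingLeft) {U S : Submodule R M}
    (hcompl : IsCompl U S) (hU : ∀ u ∈ U, ∀ u' ∈ U, ω u u' = 0) :
    (ω.domRestrict₁₂ U S).SeparatingLeft := by
  rintro ⟨u, hu⟩ huS
  ext
  refine hω u fun y => ?_
  obtain ⟨a, ha, b, hb, rfl⟩ :=
    Submodule.mem_sup.1 (hcompl.sup_eq_top ▸ Submodule.mem_top (x := y))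
  rw [map_add, hU u hu a ha, zero_add]
  exact huS ⟨b, hb⟩

theorem lagrangian_contraction_expansion_general {E : Type*} [NormedAddCommGroup E]
    [NormedSpace ℝ E] [FiniteDimensional ℝ E] (ω : E →ₗ[ℝ] E →ₗ[ℝ] ℝ)
    (hnd : ∀ x : E, (∀ y : E, ω x y = 0) → x = 0)
    (U S : Submodule ℝ E) (hcompl : IsCompl U S)
    (hU : ∀ u ∈ U, ∀ u' ∈ U, ω u u' = 0) :
    ∃ c > (0 : ℝ), ∀ A : E →L[ℝ] E,
      (∀ x y : E, ω (A x) (A y) = ω x y) →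
      (∀ u ∈ U, A u ∈ U) → (∀ s ∈ S, A s ∈ S) →
      ∀ u ∈ U, c * ‖u‖ ≤ (sSup ((fun s => ‖A s‖) '' {s : E | s ∈ S ∧ ‖s‖ = 1})) * ‖A u‖ := by
  obtain ⟨K, hK, hlow⟩ :=
    (LinearMap.separatingLeft_domRestrict₁₂_of_isCompl hnd hcompl hU).exists_norm_le_mul
  set Cω := ‖ω.toContinuousBilinearMap‖ + 1
  refine ⟨(K * Cω)⁻¹, by positivity, fun A hA _ _ u hu => ?_⟩
  set M := sSup ((fun s => ‖A s‖) '' {s : E | s ∈ S ∧ ‖s‖ = 1})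
  have hM : 0 ≤ M := Real.sSup_nonneg (by rintro _ ⟨t, -, rfl⟩; exact norm_nonneg _)
  have hpair : ∀ s : S, ‖ω.domRestrict₁₂ U S ⟨u, hu⟩ s‖ ≤ Cω * ‖A u‖ * M * ‖s‖ := fun s =>
    calc ‖ω u s‖ = ‖ω.toContinuousBilinearMap (A u) (A s)‖ := by
          rw [LinearMap.toContinuousBilinearMap_apply, hA]
      _ ≤ ‖ω.toContinuousBilinearMap‖ * ‖A u‖ * ‖A s‖ :=
          ContinuousLinearMap.le_opNorm₂ _ _ _
      _ ≤ Cω * ‖A u‖ * (M * ‖s‖) := by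
          gcongr
          · linarith
          · exact A.norm_apply_le_sSup_mul_norm S s.2
      _ = Cω * ‖A u‖ * M * ‖s‖ := by ring
  have hu_le : ‖u‖ ≤ K * (Cω * ‖A u‖ * M) := hlow ⟨u, hu⟩ _ (by positivity) hpair
  rw [inv_mul_le_iff₀ (by positivity)]
  linarith

theorem lagrangian_contraction_expansion {E : Type*} [NormedAddCommGroup E]
    [NormedSpace ℝ E] [FiniteDimensional ℝ E] (ω : E →ₗ[ℝ] E →ₗ[ℝ] ℝ)
    (halt : ∀ x : E, ω x x = 0)
    (hnd : ∀ x : E, (∀ y : E, ω x y = 0) → x = 0)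
    (U S : Submodule ℝ E) (hcompl : IsCompl U S)
    (hU : ∀ u ∈ U, ∀ u' ∈ U, ω u u' = 0)
    (hS : ∀ s ∈ S, ∀ s' ∈ S, ω s s' = 0) :
    ∃ c > (0 : ℝ), ∀ A : E →L[ℝ] E,
      (∀ x y : E, ω (A x) (A y) = ω x y) →
      (∀ u ∈ U, A u ∈ U) → (∀ s ∈ S, A s ∈ S) →
      ∀ u ∈ U, c * ‖u‖ ≤ (sSup ((fun s => ‖A s‖) '' {s : E | s ∈ S ∧ ‖s‖ = 1})) * ‖A u‖ :=
  lagrangian_contraction_expansion_general ω hnd U S hcompl hU
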